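/- Let n ≥ k ≥ 2 be positive integers. Then n ≥ R(k) holds if and only if Σ_{U ⊆ C([n],k)} ∏_{e ∈ C([n],2)} cos( −π(n−2)!/(k!(n−k)!) + (2π/(k(k−1))) · mult(e,U) ) = 0, where the sum is over all subsets U of the set of k-element subsets of [n] and the product is over all 2-element subsets e of [n]. -/

import Mathlib

/-!
Write `m(e, U)` for the number of blocks of `U` containing the pair `e`, `d = C(n-2, k-2)` for the
number of `k`-sets containing a fixed pair, and `γ = π / (k (k-1))`, so that the angle of the
statement is `2γ m(e, U) - γ d`. Expanding every cosine as `(e^{ix} + e^{-ix}) / 2` turns the product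
over pairs into a sum over two-colourings `G` of the pairs; exchanging the two sums, the exponent is
a signed count of incident (pair, block) couples, and since every pair lies in exactly `d` blocks it
is symmetric in the roles of pairs and blocks. Reading the same expansion backwards in the blocks
gives `2^{C(n,k) - C(n,2)} Σ_G ∏_S cos (γ (a - b))`, where `a` and `b` count the pairs of colour
`G` and of the other colour inside the `k`-set `S`. As `a + b = C(k,2)`, this cosine equals
`sin (π a / C(k,2)) ≥ 0`, vanishing exactly when `S` is monochromatic. Hence the sum is zero iff
every two-colouring of the pairs of `[n]` has a monochromatic `k`-set, i.e. iff `n ≥ R(k)`.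
-/

open Finset

/-- The k-th diagonal Ramsey number. -/
noncomputable def diagonalRamsey (k : ℕ) : ℕ :=
  sInf {n : ℕ | 0 < n ∧ ∀ G : SimpleGraph (Fin n),
    (∃ s : Finset (Fin n), G.IsNClique k s) ∨ (∃ s : Finset (Fin n), Gᶜ.IsNClique k s)}

theorem Complex.prod_cos_eq_sum_powerset {ι : Type*} [DecidableEq ι] (s : Finset ι)
    (x : ι → ℂ) :
    ∏ i ∈ s, cos (x i) =
      (2 ^ #s)⁻¹ * ∑ t ∈ s.powerset, exp ((∑ i ∈ t, x i - ∑ i ∈ s \ t, x i) * I) := by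
  have hcos : ∀ i, cos (x i) = 2⁻¹ * (exp (x i * I) + exp (-x i * I)) := fun i => by
    rw [cos]; ring
  simp only [hcos, prod_mul_distrib, prod_const, prod_add, inv_pow, ← exp_sum, ← exp_add]
  congr 1
  refine sum_congr rfl fun t _ => congrArg exp ?_
  rw [sub_mul, sum_mul, sum_mul, sub_eq_add_neg, ← sum_neg_distrib]
  simp only [neg_mul]

open Real

theorem Real.sin_pi_mul_div_nonneg {a c : ℕ} (h : a ≤ c) : 0 ≤ sin (π * a / c) := by
  rcases Nat.eq_zero_or_pos c with rfl | hc
  · simp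
  apply sin_nonneg_of_nonneg_of_le_pi (by positivity)
  rw [mul_div_assoc]
  exact mul_le_of_le_one_right pi_pos.le (div_le_one_of_le₀ (by exact_mod_cast h) (by positivity))

theorem Real.sin_pi_mul_div_eq_zero_iff {a c : ℕ} (h : a ≤ c) (hc : 0 < c) :
    sin (π * a / c) = 0 ↔ a = 0 ∨ a = c := by
  refine ⟨fun h0 => ?_, ?_⟩
  · by_contra! ha
    have hac : (a : ℝ) < c := by exact_mod_cast lt_of_le_of_ne h ha.2
    have ha0 : (0 : ℝ) < a := by exact_mod_cast Nat.pos_of_ne_zero ha.1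
    refine (sin_pos_of_pos_of_lt_pi (by positivity) ?_).ne' h0
    rw [mul_div_assoc]
    exact mul_lt_of_lt_one_right pi_pos ((div_lt_one (by positivity)).2 hac)
  · rintro (rfl | rfl)
    · simp
    · rw [mul_div_cancel_right₀ _ (by positivity), sin_pi]

theorem Real.cos_pi_div_mul_sub_eq_sin {k a b : ℕ} (hk : 2 ≤ k) (hab : a + b = k.choose 2) :
    cos (π / (k * (k - 1)) * (a - b)) = sin (π * a / k.choose 2) := by
  have hk1 : (k : ℝ) - 1 ≠ 0 := by
    have : (2 : ℝ) ≤ k := by exact_mod_cast hk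
    linarith
  have hb : (b : ℝ) = k * (k - 1) / 2 - a := by
    rw [← Nat.cast_choose_two, ← hab]; push_cast; ring
  rw [← cos_sub_pi_div_two, hb, Nat.cast_choose_two]
  congr 1
  field_simp
  ring

theorem Nat.cast_factorial_sub_two_div (R : Type*) [Field R] [CharZero R] {n k : ℕ}
    (hk : 2 ≤ k) (hkn : k ≤ n) :
    ((n - 2).factorial : R) / (k.factorial * (n - k).factorial) =
      (n - 2).choose (k - 2) / (k * (k - 1)) := by
  obtain ⟨j, rfl⟩ : ∃ j, k = j + 2 := ⟨k - 2, by omega⟩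
  obtain ⟨m, rfl⟩ : ∃ m, n = j + 2 + m := ⟨n - (j + 2), by omega⟩
  rw [show j + 2 + m - 2 = j + m by omega, show j + 2 + m - (j + 2) = m by omega,
    show j + 2 - 2 = j by omega, Nat.cast_choose R (Nat.le_add_right j m),
    show j + m - j = m by omega, Nat.factorial_succ, Nat.factorial_succ]
  push_cast
  rw [show (j : R) + 2 - 1 = j + 1 by ring, show (j : R) + 1 + 1 = j + 2 by ring]
  field_simp

namespace Finset

theorem card_filter_add_card_filter_sdiff {ι : Type*} [DecidableEq ι] (p : ι → Prop)
    [DecidablePred p] {s t : Finset ι} (h : t ⊆ s) :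
    #{i ∈ t | p i} + #{i ∈ s \ t | p i} = #{i ∈ s | p i} := by
  rw [← card_union_of_disjoint (disjoint_filter_filter disjoint_sdiff), ← filter_union,
    union_sdiff_of_subset h]

variable {α β : Type*} (r : α → β → Prop) [DecidableRel r]

theorem sum_card_filter_comm {R : Type*} [CommSemiring R] (A : Finset α) (B : Finset β) :
    ∑ a ∈ A, (#{b ∈ B | r a b} : R) = ∑ b ∈ B, (#{a ∈ A | r a b} : R) := by
  rw [← Nat.cast_sum, ← Nat.cast_sum]
  exact congrArg _ (sum_card_bipartiteAbove_eq_sum_card_bipartiteBelow r)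

variable [DecidableEq α] [DecidableEq β]

theorem signed_incidence_sum_symm {E G : Finset α} {K U : Finset β} (hG : G ⊆ E) (hU : U ⊆ K)
    {d : ℕ} (hd : ∀ e ∈ E, #{S ∈ K | r e S} = d) {R : Type*} [CommRing R] (γ : R) :
    ∑ e ∈ G, (2 * γ * #{S ∈ U | r e S} - γ * d)
        - ∑ e ∈ E \ G, (2 * γ * #{S ∈ U | r e S} - γ * d)
      = ∑ S ∈ U, γ * ((#{e ∈ G | r e S} : R) - #{e ∈ E \ G | r e S})
        - ∑ S ∈ K \ U, γ * ((#{e ∈ G | r e S} : R) - #{e ∈ E \ G | r e S}) := by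
  have hsplit : ∀ e ∈ E, 2 * γ * #{S ∈ U | r e S} - γ * d
      = γ * (#{S ∈ U | r e S} - #{S ∈ K \ U | r e S}) := fun e he => by
    rw [← hd e he, ← card_filter_add_card_filter_sdiff _ hU]
    push_cast
    ring
  rw [sum_congr rfl fun e he => hsplit e (hG he),
    sum_congr rfl fun e he => hsplit e (sdiff_subset he)]
  simp only [← mul_sum, sum_sub_distrib, sum_card_filter_comm r]
  ring

theorem sum_powerset_prod_cos (E : Finset α) (K : Finset β) {d : ℕ}
    (hd : ∀ e ∈ E, #{S ∈ K | r e S} = d) (γ : ℝ) :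
    ∑ U ∈ K.powerset, ∏ e ∈ E, cos (2 * γ * #{S ∈ U | r e S} - γ * d) =
      2 ^ #K / 2 ^ #E *
        ∑ G ∈ E.powerset, ∏ S ∈ K, cos (γ * (#{e ∈ G | r e S} - #{e ∈ E \ G | r e S})) := by
  apply Complex.ofReal_injective
  push_cast
  simp only [Complex.prod_cos_eq_sum_powerset]
  rw [← mul_sum, ← mul_sum, sum_comm, ← mul_assoc,
    show (2 : ℂ) ^ #K / 2 ^ #E * (2 ^ #K)⁻¹ = (2 ^ #E)⁻¹ by field_simp]
  refine congrArg _ (sum_congr rfl fun G hG => sum_congr rfl fun U hU => ?_)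
  rw [signed_incidence_sum_symm r (mem_powerset.1 hG) (mem_powerset.1 hU) hd]

end Finset

namespace SimpleGraph

section PairGraph

variable {V : Type*} [DecidableEq V]

def pairGraph (G : Finset (Finset V)) : SimpleGraph V :=
  fromRel fun u v => ({u, v} : Finset V) ∈ G

theorem forall_mem_powersetCard_two {S : Finset V} {p : Finset V → Prop} :
    (∀ e ∈ powersetCard 2 S, p e) ↔ ∀ u ∈ S, ∀ v ∈ S, u ≠ v → p {u, v} := by
  refine ⟨fun h u hu v hv huv => h _ (mem_powersetCard.2 ⟨?_, card_pair huv⟩), fun h e he => ?_⟩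
  · exact insert_subset hu (singleton_subset_iff.2 hv)
  · obtain ⟨hsub, hcard⟩ := mem_powersetCard.1 he
    obtain ⟨u, v, huv, rfl⟩ := card_eq_two.1 hcard
    exact h u (hsub (mem_insert_self u _)) v (hsub (mem_insert_of_mem (mem_singleton_self v))) huv

theorem isNClique_pairGraph_iff (G : Finset (Finset V)) {S : Finset V} {k : ℕ} (hS : #S = k) :
    (pairGraph G).IsNClique k S ↔ #{e ∈ powersetCard 2 S | e ∈ G} = k.choose 2 := by
  rw [isNClique_iff, ← hS, ← card_powersetCard, card_filter_eq_iff, forall_mem_powersetCard_two]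
  simp +contextual [IsClique, Set.Pairwise, pairGraph, pair_comm]

theorem isNClique_compl_pairGraph_iff (G : Finset (Finset V)) {S : Finset V} {k : ℕ}
    (hS : #S = k) :
    (pairGraph G)ᶜ.IsNClique k S ↔ #{e ∈ powersetCard 2 S | e ∈ G} = 0 := by
  rw [isNClique_iff, card_filter_eq_zero_iff, forall_mem_powersetCard_two]
  simp +contextual [IsClique, Set.Pairwise, pairGraph, pair_comm, hS]

theorem card_filter_mem_powersetCard_two_le {G : Finset (Finset V)} {S : Finset V} {k : ℕ}
    (hS : #S = k) : #{e ∈ powersetCard 2 S | e ∈ G} ≤ k.choose 2 :=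
  (card_filter_le _ _).trans_eq (by rw [card_powersetCard, hS])

variable [Fintype V]

theorem exists_pairGraph_eq (H : SimpleGraph V) :
    ∃ G ⊆ powersetCard 2 (univ : Finset V), pairGraph G = H := by
  classical
  refine ⟨{e ∈ powersetCard 2 (univ : Finset V) | ∀ u ∈ e, ∀ v ∈ e, u ≠ v → H.Adj u v},
    filter_subset _ _, ?_⟩
  ext u v
  simp only [pairGraph, fromRel_adj, mem_filter, mem_powersetCard, subset_univ, true_and,
    mem_insert, mem_singleton]
  refine ⟨fun ⟨huv, h⟩ => ?_, fun h => ⟨h.ne, Or.inl ⟨card_pair h.ne, ?_⟩⟩⟩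
  · rcases h with ⟨-, h⟩ | ⟨-, h⟩
    · exact h u (Or.inl rfl) v (Or.inr rfl) huv
    · exact h u (Or.inr rfl) v (Or.inl rfl) huv
  · rintro a (rfl | rfl) b (rfl | rfl) hab
    exacts [absurd rfl hab, h, h.symm, absurd rfl hab]

theorem filter_subset_eq_filter_mem {G : Finset (Finset V)} (hG : G ⊆ powersetCard 2 univ)
    (S : Finset V) : {e ∈ G | e ⊆ S} = {e ∈ powersetCard 2 S | e ∈ G} := by
  ext e
  simp only [mem_filter, mem_powersetCard]
  exact ⟨fun ⟨he, heS⟩ => ⟨⟨heS, (mem_powersetCard.1 (hG he)).2⟩, he⟩,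
    fun ⟨⟨heS, _⟩, he⟩ => ⟨he, heS⟩⟩

end PairGraph

variable {V W : Type*}

theorem compl_comap (f : V ↪ W) (G : SimpleGraph W) : (G.comap f)ᶜ = Gᶜ.comap f := by
  ext u v
  simp [f.injective.ne_iff]

theorem IsNClique.of_comap {G : SimpleGraph W} {f : V ↪ W} {k : ℕ} {s : Finset V}
    (h : (G.comap f).IsNClique k s) : G.IsNClique k (s.map f) :=
  h.map.mono (map_comap_le f G)

theorem exists_isNClique_or_isNClique_compl [DecidableEq V] (G : SimpleGraph V) (s t : ℕ)
    {A : Finset V} (hA : (s + t).choose s ≤ #A) :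
    (∃ B ⊆ A, G.IsNClique s B) ∨ ∃ B ⊆ A, Gᶜ.IsNClique t B := by
  induction s generalizing t A with
  | zero => exact Or.inl ⟨∅, empty_subset A, by simp⟩
  | succ s ihs =>
    induction t generalizing A with
    | zero => exact Or.inr ⟨∅, empty_subset A, by simp⟩
    | succ t iht =>
      classical
      obtain ⟨v, hv⟩ : A.Nonempty := card_pos.1 ((Nat.choose_pos (by omega)).trans_le hA)
      set N := {w ∈ A.erase v | G.Adj v w}
      set M := {w ∈ A.erase v | ¬G.Adj v w}
      have hNM : #N + #M + 1 = #A := by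
        rw [card_filter_add_card_filter_not, card_erase_add_one hv]
      have hpascal : (s + 1 + (t + 1)).choose (s + 1)
          = (s + (t + 1)).choose s + (s + 1 + t).choose (s + 1) := by
        rw [show s + 1 + (t + 1) = s + t + 1 + 1 by omega, Nat.choose_succ_succ]
        congr 2; omega
      have hNA : N ⊆ A := (filter_subset _ _).trans (erase_subset v A)
      have hMA : M ⊆ A := (filter_subset _ _).trans (erase_subset v A)
      rcases (by omega : (s + (t + 1)).choose s ≤ #N ∨ (s + 1 + t).choose (s + 1) ≤ #M)
        with hN | hM
      · rcases ihs (t + 1) hN with ⟨B, hBN, hB⟩ | ⟨B, hBN, hB⟩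
        · refine Or.inl ⟨insert v B, insert_subset hv (hBN.trans hNA), hB.insert fun b hb => ?_⟩
          exact (mem_filter.1 (hBN hb)).2
        · exact Or.inr ⟨B, hBN.trans hNA, hB⟩
      · rcases iht hM with ⟨B, hBM, hB⟩ | ⟨B, hBM, hB⟩
        · exact Or.inl ⟨B, hBM.trans hMA, hB⟩
        · refine Or.inr ⟨insert v B, insert_subset hv (hBM.trans hMA), hB.insert fun b hb => ?_⟩
          obtain ⟨hbA, hbv⟩ := mem_filter.1 (hBM hb)
          exact (compl_adj G v b).2 ⟨(ne_of_mem_erase hbA).symm, hbv⟩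

end SimpleGraph

open SimpleGraph

theorem diagonalRamsey_le_iff {n k : ℕ} (hn : 0 < n) :
    diagonalRamsey k ≤ n ↔
      ∀ G : SimpleGraph (Fin n), (∃ s, G.IsNClique k s) ∨ ∃ s, Gᶜ.IsNClique k s := by
  refine ⟨fun h G => ?_, fun h => Nat.sInf_le ⟨hn, h⟩⟩
  -- without Ramsey's theorem the infimum could be that of the empty set, the junk value `0`
  have hne : {m : ℕ | 0 < m ∧ ∀ G : SimpleGraph (Fin m),
      (∃ s, G.IsNClique k s) ∨ ∃ s, Gᶜ.IsNClique k s}.Nonempty := by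
    refine ⟨(k + k).choose k, Nat.choose_pos le_add_self, fun G => ?_⟩
    exact (G.exists_isNClique_or_isNClique_compl k k (A := univ) (by simp)).imp
      (fun ⟨B, _, hB⟩ => ⟨B, hB⟩) fun ⟨B, _, hB⟩ => ⟨B, hB⟩
  have hR : ∀ G : SimpleGraph (Fin (diagonalRamsey k)),
      (∃ s, G.IsNClique k s) ∨ ∃ s, Gᶜ.IsNClique k s := (Nat.sInf_mem hne).2
  rcases hR (G.comap (Fin.castLEEmb h)) with ⟨s, hs⟩ | ⟨s, hs⟩
  · exact Or.inl ⟨_, hs.of_comap⟩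
  · rw [compl_comap] at hs
    exact Or.inr ⟨_, hs.of_comap⟩

section Counting

variable {V : Type*} [Fintype V] [DecidableEq V] {k : ℕ}

theorem prod_sin_eq_zero_iff (hk : 2 ≤ k) (G : Finset (Finset V)) :
    ∏ S ∈ powersetCard k (univ : Finset V),
        sin (π * #{e ∈ powersetCard 2 S | e ∈ G} / k.choose 2) = 0 ↔
      (∃ s, (pairGraph G).IsNClique k s) ∨ ∃ s, (pairGraph G)ᶜ.IsNClique k s := by
  have hC : 0 < k.choose 2 := Nat.choose_pos hk
  rw [prod_eq_zero_iff]
  constructor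
  · rintro ⟨S, hS, h0⟩
    have hS : #S = k := (mem_powersetCard.1 hS).2
    rcases (sin_pi_mul_div_eq_zero_iff (card_filter_mem_powersetCard_two_le hS) hC).1 h0
      with h | h
    · exact Or.inr ⟨S, (isNClique_compl_pairGraph_iff G hS).2 h⟩
    · exact Or.inl ⟨S, (isNClique_pairGraph_iff G hS).2 h⟩
  · rintro (⟨S, hS⟩ | ⟨S, hS⟩) <;>
      refine ⟨S, mem_powersetCard.2 ⟨subset_univ S, hS.card_eq⟩,
        (sin_pi_mul_div_eq_zero_iff (card_filter_mem_powersetCard_two_le hS.card_eq) hC).2 ?_⟩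
    · exact Or.inr ((isNClique_pairGraph_iff G hS.card_eq).1 hS)
    · exact Or.inl ((isNClique_compl_pairGraph_iff G hS.card_eq).1 hS)

theorem prod_cos_eq_prod_sin (hk : 2 ≤ k) {G : Finset (Finset V)}
    (hG : G ⊆ powersetCard 2 univ) :
    ∏ S ∈ powersetCard k (univ : Finset V),
        cos (π / (k * (k - 1)) *
          ((#{e ∈ G | e ⊆ S} : ℝ) - #{e ∈ powersetCard 2 univ \ G | e ⊆ S})) =
      ∏ S ∈ powersetCard k (univ : Finset V),
        sin (π * #{e ∈ powersetCard 2 S | e ∈ G} / k.choose 2) := by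
  refine prod_congr rfl fun S hS => ?_
  have hnot : {e ∈ powersetCard 2 S | e ∈ powersetCard 2 univ \ G}
      = {e ∈ powersetCard 2 S | e ∉ G} := filter_congr fun e he => by
    simp [mem_sdiff, (mem_powersetCard.1 he).2]
  rw [filter_subset_eq_filter_mem hG, filter_subset_eq_filter_mem sdiff_subset, hnot]
  refine cos_pi_div_mul_sub_eq_sin hk ?_
  rw [card_filter_add_card_filter_not, card_powersetCard, (mem_powersetCard.1 hS).2]

theorem sum_prod_cos_eq_zero_iff (hk : 2 ≤ k) :
    ∑ G ∈ (powersetCard 2 (univ : Finset V)).powerset, ∏ S ∈ powersetCard k (univ : Finset V),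
        cos (π / (k * (k - 1)) *
          ((#{e ∈ G | e ⊆ S} : ℝ) - #{e ∈ powersetCard 2 univ \ G | e ⊆ S})) = 0 ↔
      ∀ H : SimpleGraph V, (∃ s, H.IsNClique k s) ∨ ∃ s, Hᶜ.IsNClique k s := by
  rw [sum_congr rfl fun G hG => prod_cos_eq_prod_sin hk (mem_powerset.1 hG),
    sum_eq_zero_iff_of_nonneg fun G _ => prod_nonneg fun S hS =>
      sin_pi_mul_div_nonneg (card_filter_mem_powersetCard_two_le (mem_powersetCard.1 hS).2)]
  simp only [prod_sin_eq_zero_iff hk]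
  refine ⟨fun h H => ?_, fun h G _ => h _⟩
  obtain ⟨G, hG, rfl⟩ := exists_pairGraph_eq H
  exact h G (mem_powerset.2 hG)

end Counting

theorem stmt_4 (n k : ℕ) (hk : 2 ≤ k) (hkn : k ≤ n) :
    diagonalRamsey k ≤ n ↔
      (∑ U ∈ (Finset.powersetCard k (Finset.univ : Finset (Fin n))).powerset,
        ∏ e ∈ Finset.powersetCard 2 (Finset.univ : Finset (Fin n)),
          Real.cos
            (-(Real.pi * ((n - 2).factorial : ℝ) /
                ((k.factorial : ℝ) * ((n - k).factorial : ℝ))) +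
              2 * Real.pi / ((k : ℝ) * ((k : ℝ) - 1)) *
                ((U.filter fun S => e ⊆ S).card : ℝ))) = 0 := by
  set γ : ℝ := π / (k * (k - 1))
  have hangle : ∀ m : ℝ, -(π * ((n - 2).factorial : ℝ) /
      ((k.factorial : ℝ) * ((n - k).factorial : ℝ))) + 2 * π / ((k : ℝ) * ((k : ℝ) - 1)) * m
      = 2 * γ * m - γ * ((n - 2).choose (k - 2) : ℕ) := fun m => by
    rw [mul_div_assoc, Nat.cast_factorial_sub_two_div ℝ hk hkn]
    ring
  have hreg : ∀ e ∈ powersetCard 2 (univ : Finset (Fin n)),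
      #{S ∈ powersetCard k univ | e ⊆ S} = (n - 2).choose (k - 2) := fun e he => by
    have he : #e = 2 := (mem_powersetCard.1 he).2
    rw [card_filter_powersetCard_subset e univ k (subset_univ e) (he ▸ hk), he, card_univ,
      Fintype.card_fin]
  simp only [hangle]
  rw [sum_powerset_prod_cos (fun e S : Finset (Fin n) => e ⊆ S) _ _ hreg, mul_eq_zero,
    or_iff_right (by positivity), sum_prod_cos_eq_zero_iff hk, diagonalRamsey_le_iff (by omega)]
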